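/- Let ⟨Σ,Δ⟩ be a finite default theory, ⟨Ξ,A⟩ its associated argumentation system, and φ a formula of L_P where P = Var(⟨Σ,Δ⟩). Then φ is a skeptical consequence of ⟨Σ,Δ⟩ (i.e., φ belongs to all extensions) if and only if dt(Ξ) ⊆ {α⁺ : α ∈ sp(φ;Ξ)}. -/

import Mathlib

/-! ## Classical propositional logic -/

/-- Propositional formulas over a set of variables `V`. -/
inductive PropForm (V : Type) : Type
  | var : V → PropForm V
  | verum : PropForm V
  | falsum : PropForm V
  | neg : PropForm V → PropForm V
  | conj : PropForm V → PropForm V → PropForm V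
  | disj : PropForm V → PropForm V → PropForm V
  | impl : PropForm V → PropForm V → PropForm V

namespace PropForm

/-- Truth-value of a formula under an assignment. -/
def eval {V : Type} (v : V → Bool) : PropForm V → Bool
  | var a => v a
  | verum => true
  | falsum => false
  | neg φ => !(eval v φ)
  | conj φ ψ => eval v φ && eval v ψ
  | disj φ ψ => eval v φ || eval v ψ
  | impl φ ψ => !(eval v φ) || eval v ψ

/-- Renaming/embedding of variables. -/
def map {V W : Type} (f : V → W) : PropForm V → PropForm W
  | var a => var (f a)
  | verum => verum
  | falsum => falsum
  | neg φ => neg (map f φ)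
  | conj φ ψ => conj (map f φ) (map f ψ)
  | disj φ ψ => disj (map f φ) (map f ψ)
  | impl φ ψ => impl (map f φ) (map f ψ)

/-- The set of variables occurring in a formula. -/
def vars {V : Type} : PropForm V → Set V
  | var a => {a}
  | verum => ∅
  | falsum => ∅
  | neg φ => vars φ
  | conj φ ψ => vars φ ∪ vars ψ
  | disj φ ψ => vars φ ∪ vars ψ
  | impl φ ψ => vars φ ∪ vars ψ

end PropForm

/-- An assignment satisfies a set of formulas. -/
def Satisfies {V : Type} (v : V → Bool) (S : Set (PropForm V)) : Prop :=
  ∀ φ ∈ S, φ.eval v = true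

/-- Satisfiability (= consistency, by classical completeness) of a set of formulas. -/
def Satisfiable {V : Type} (S : Set (PropForm V)) : Prop :=
  ∃ v, Satisfies v S

/-- `S ⊢ φ` (classical propositional derivability = semantic entailment). -/
def Entails {V : Type} (S : Set (PropForm V)) (φ : PropForm V) : Prop :=
  ∀ v, Satisfies v S → φ.eval v = true

/-- `Th S`: the deductive closure of `S`. -/
def Th {V : Type} (S : Set (PropForm V)) : Set (PropForm V) :=
  {φ | Entails S φ}

/-! ## Default logic -/

/-- A default `pre : jus₁, …, jus_k / con`. -/
structure Default (P : Type) : Type where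
  pre : PropForm P
  jus : List (PropForm P)
  con : PropForm P

/-- `E` is an extension of the default theory `⟨S, Δ⟩` (Reiter, via the
sequence characterization): there is a sequence `Es` with `Es 0 = S`,
`Es (j+1) = Th (Es j) ∪ con {δ ∈ Δ : pre δ ∈ Es j and ¬β ∉ E for each justification β}`
and `E = ⋃ j, Es j`. -/
def IsExtension {P : Type} (S : Set (PropForm P)) (Δ : Finset (Default P))
    (E : Set (PropForm P)) : Prop :=
  ∃ Es : ℕ → Set (PropForm P),
    Es 0 = S ∧
    (∀ j, Es (j + 1) = Th (Es j) ∪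
      {γ | ∃ δ ∈ Δ, γ = δ.con ∧ δ.pre ∈ Es j ∧ ∀ β ∈ δ.jus, PropForm.neg β ∉ E}) ∧
    E = ⋃ j, Es j

/-! ## The translation into an argumentation system -/

/-- Fresh assumption propositions: one prerequisitional assumption `a_δ^p`,
justificational assumptions `a_{δ,i}^j`, and one consequential assumption `a_δ^c`
for each default `δ`. -/
inductive ALabel (P : Type) : Type
  | pre : Default P → ALabel P
  | jus : Default P → ℕ → ALabel P
  | con : Default P → ALabel P

/-- The variables of the argumentation theory: the original propositions `P`
together with the fresh assumptions. -/
abbrev VA (P : Type) : Type := P ⊕ ALabel P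

/-- Embedding of formulas of `L_P` into the extended language. -/
def emb {P : Type} (φ : PropForm P) : PropForm (VA P) :=
  φ.map Sum.inl

/-- The assumption `a` as an atomic formula. -/
def avar {P : Type} (a : ALabel P) : PropForm (VA P) :=
  PropForm.var (Sum.inr a)

/-- The translation `t(δ) = {a_δ^p → ¬pre(δ)} ∪ {a_{δ,i}^j → β_i} ∪ {a_δ^c → con(δ)}`. -/
def transDefault {P : Type} (δ : Default P) : Set (PropForm (VA P)) :=
  {PropForm.impl (avar (ALabel.pre δ)) (PropForm.neg (emb δ.pre))} ∪
  {φ | ∃ i : Fin δ.jus.length, φ = PropForm.impl (avar (ALabel.jus δ i)) (emb (δ.jus.get i))} ∪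
  {PropForm.impl (avar (ALabel.con δ)) (emb δ.con)}

/-- `Ξ = Σ ∪ ⋃_{δ ∈ Δ} t(δ)`, the argumentation theory associated with `⟨S, Δ⟩`. -/
def Xi {P : Type} (S : Set (PropForm P)) (Δ : Finset (Default P)) :
    Set (PropForm (VA P)) :=
  (emb '' S) ∪ ⋃ δ ∈ Δ, transDefault δ

/-! ## Terms, inconsistency, structures -/

/-- A literal over the assumptions: an assumption together with a sign. -/
structure ALit (P : Type) : Type where
  atom : ALabel P
  sign : Bool

/-- A term: a set of assumption literals with no complementary pair.
(The trivial term `{⊤}`, imposing no assumptions, is represented by `∅`.) -/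
def IsTerm {P : Type} (α : Set (ALit P)) : Prop :=
  ∀ a : ALabel P, ¬ (ALit.mk a true ∈ α ∧ ALit.mk a false ∈ α)

/-- The literal `ℓ` as a formula. -/
def ALit.form {P : Type} (ℓ : ALit P) : PropForm (VA P) :=
  if ℓ.sign then avar ℓ.atom else PropForm.neg (avar ℓ.atom)

/-- A set of literals as a set of formulas. -/
def litForms {P : Type} (α : Set (ALit P)) : Set (PropForm (VA P)) :=
  ALit.form '' α

/-- `α ∈ I(Ξ)`: the term `α` is inconsistent relative to `Ξ`,
i.e. `α ∪ Ξ` is unsatisfiable. -/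
def InI {P : Type} (Ξ : Set (PropForm (VA P))) (α : Set (ALit P)) : Prop :=
  ¬ Satisfiable (Ξ ∪ litForms α)

/-- `μI(Ξ)`: the minimal contradictions, i.e. the inconsistent terms none of whose
proper subsets is inconsistent relative to `Ξ`. -/
def muI {P : Type} (Ξ : Set (PropForm (VA P))) : Set (Set (ALit P)) :=
  {α | IsTerm α ∧ InI Ξ α ∧ ∀ β, β ⊂ α → ¬ InI Ξ β}

/-- `⟨α, 𝒜⟩` is a structure: `α` is a term consistent with `Ξ` and each single
literal of `𝒜` can be consistently added to `α`. -/
def IsStruct {P : Type} (Ξ : Set (PropForm (VA P))) (α 𝒜 : Set (ALit P)) : Prop :=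
  IsTerm α ∧ ¬ InI Ξ α ∧ ∀ ℓ ∈ 𝒜, ¬ InI Ξ (insert ℓ α)

/-- The (positive) prerequisitional assumption literal `a_δ^p` of `δ`. -/
def preLit {P : Type} (δ : Default P) : ALit P := ⟨ALabel.pre δ, true⟩

/-- The (positive) justificational assumption literal `a_{δ,i}^j` of `δ`. -/
def jusLit {P : Type} (δ : Default P) (i : ℕ) : ALit P := ⟨ALabel.jus δ i, true⟩

/-- The (positive) consequential assumption literal `a_δ^c` of `δ`. -/
def conLit {P : Type} (δ : Default P) : ALit P := ⟨ALabel.con δ, true⟩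

/-- The set of justificational assumption literals of `δ`. -/
def jusLits {P : Type} (δ : Default P) : Set (ALit P) :=
  {ℓ | ∃ i : Fin δ.jus.length, ℓ = jusLit δ i}

/-- `α ⊆ A_c`: `α` is a consequential term (every literal of `α` is the positive
consequential assumption of some default of `Δ`). -/
def ConsTerm {P : Type} (Δ : Finset (Default P)) (α : Set (ALit P)) : Prop :=
  ∀ ℓ ∈ α, ∃ δ ∈ Δ, ℓ = conLit δ

/-- The default assumption of `δ` is applicable w.r.t. the consequential term `α`:
`{a_δ^p} ∪ α ∈ I(Ξ)` and `{a_{δ,i}^j} ∪ α ∉ I(Ξ)` for every justification index `i`. -/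
def Applicable {P : Type} (Ξ : Set (PropForm (VA P))) (δ : Default P)
    (α : Set (ALit P)) : Prop :=
  InI Ξ (insert (preLit δ) α) ∧
  ∀ i : Fin δ.jus.length, ¬ InI Ξ (insert (jusLit δ i) α)

/-! ## Accessible structures and default terms -/

/-- One application step of the map `a_δ^≺` in the applicable case:
add `a_δ^c` to the anchor and the justificational assumptions of `δ`
to the set of irrelevant literals. -/
def stepPair {P : Type} (δ : Default P) (p : Set (ALit P) × Set (ALit P)) :
    Set (ALit P) × Set (ALit P) :=
  (insert (conLit δ) p.1, jusLits δ ∪ p.2)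

/-- The CJ-pair obtained by successively applying the default assumptions of `L`
starting from `⟨{⊤}, ∅⟩` (the trivial term being represented by `∅`). -/
def runList {P : Type} (L : List (Default P)) : Set (ALit P) × Set (ALit P) :=
  L.foldl (fun p δ => stepPair δ p) (∅, ∅)

/-- Starting from the CJ-pair `p`, the defaults of the list can be applied one
after the other: at each step the current pair is a structure and the next
default assumption is applicable w.r.t. the current anchor. -/
def ValidFrom {P : Type} (Ξ : Set (PropForm (VA P))) :
    Set (ALit P) × Set (ALit P) → List (Default P) → Prop
  | _, [] => True
  | p, δ :: L => IsStruct Ξ p.1 p.2 ∧ Applicable Ξ δ p.1 ∧ ValidFrom Ξ (stepPair δ p) L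

/-- `L` is a generating sequence of the structure `⟨α, 𝒜⟩`: a sequence of pairwise
distinct default assumptions of `Δ`, applicable one after the other starting from
`⟨{⊤}, ∅⟩`, ending exactly in the structure `⟨α, 𝒜⟩`, and such that no default
assumption of `Δ` applicable w.r.t. `α` is missing from the sequence. -/
def GenSeq {P : Type} (Ξ : Set (PropForm (VA P))) (Δ : Finset (Default P))
    (L : List (Default P)) (α 𝒜 : Set (ALit P)) : Prop :=
  L.Nodup ∧ (∀ δ ∈ L, δ ∈ Δ) ∧ ValidFrom Ξ (∅, ∅) L ∧ runList L = (α, 𝒜) ∧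
  IsStruct Ξ α 𝒜 ∧ ∀ δ ∈ Δ, Applicable Ξ δ α → δ ∈ L

/-- The structure `⟨α, 𝒜⟩` is accessible (w.r.t. the default assumptions of `Δ`). -/
def Accessible {P : Type} (Ξ : Set (PropForm (VA P))) (Δ : Finset (Default P))
    (α 𝒜 : Set (ALit P)) : Prop :=
  ∃ L : List (Default P), GenSeq Ξ Δ L α 𝒜

/-- `dt(Ξ)`: the default terms, i.e. the anchors of accessible structures. -/
def dt {P : Type} (Ξ : Set (PropForm (VA P))) (Δ : Finset (Default P)) :
    Set (Set (ALit P)) :=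
  {α | ∃ 𝒜, Accessible Ξ Δ α 𝒜}

/-! ## Supporting arguments -/

/-- `sp(φ; Ξ)`: the supporting arguments for `φ`, i.e. the terms `α` with
`α, Ξ ⊢ φ` such that every term extending `α` is consistent with `Ξ`. -/
def sp {P : Type} (Ξ : Set (PropForm (VA P))) (φ : PropForm (VA P)) :
    Set (Set (ALit P)) :=
  {α | IsTerm α ∧ Entails (Ξ ∪ litForms α) φ ∧
    ∀ α', IsTerm α' → α ⊆ α' → ¬ InI Ξ α'}

/-- `α⁺ = α ∩ A`: the positive literals of the term `α`. -/
def posPart {P : Type} (α : Set (ALit P)) : Set (ALit P) :=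
  {ℓ ∈ α | ℓ.sign = true}

/-!
Everything reduces to propositional logic over `P`. Since assumptions occur in `Ξ` only as
antecedents `a → ψ`, a term is consistent with `Ξ` (resp. entails `emb φ` together with `Ξ`) iff `Σ`
together with the formulas guarded by its positive assumptions is satisfiable (resp. entails `φ`).
For a default term `{a_δ^c : δ ∈ L}` this base is `Σ ∪ con(L)`, and accessibility says that the
defaults of `L` can be applied in order, that their justifications are consistent with
`Σ ∪ con(L)`, and that `L` contains every default firing in `Th(Σ ∪ con(L))`: precisely that
`Th(Σ ∪ con(L))` is an extension generated by `L`. Conversely every extension other than the whole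
language is `Th(Σ ∪ con(L))` for its generating defaults `L`, listed by the stage at which their
prerequisites appear. Finally a default term is the positive part of a supporting argument for `φ`
iff its base is consistent and entails `φ`, the witness being the term that negates every other
assumption.
-/

section Propositional

variable {V : Type} {T T' : Set (PropForm V)} {φ : PropForm V}

theorem PropForm.eval_map {W : Type} (f : V → W) (w : W → Bool) (φ : PropForm V) :
    (φ.map f).eval w = φ.eval (w ∘ f) := by
  induction φ <;> simp [PropForm.map, PropForm.eval, *]

theorem satisfies_union {v : V → Bool} : Satisfies v (T ∪ T') ↔ Satisfies v T ∧ Satisfies v T' := by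
  simp only [Satisfies, Set.mem_union, or_imp, forall_and]

theorem Satisfiable.mono (h : Satisfiable T) (hT : T' ⊆ T) : Satisfiable T' :=
  let ⟨v, hv⟩ := h; ⟨v, fun ψ hψ => hv ψ (hT hψ)⟩

theorem subset_Th : T ⊆ Th T := fun φ hφ _ hv => hv φ hφ

theorem Th_mono (hT : T' ⊆ T) : Th T' ⊆ Th T := fun _ hφ v hv => hφ v fun ψ hψ => hv ψ (hT hψ)

theorem Th_Th : Th (Th T) = Th T :=
  Set.Subset.antisymm (fun _ hφ v hv => hφ v fun _ hψ => hψ v hv) (Th_mono subset_Th)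

theorem Th_eq_univ (h : ¬ Satisfiable T) : Th T = Set.univ :=
  Set.eq_univ_of_forall fun _ v hv => absurd ⟨v, hv⟩ h

theorem mem_Th_iff_not_satisfiable_insert_neg :
    φ ∈ Th T ↔ ¬ Satisfiable (insert (PropForm.neg φ) T) := by
  simp only [Th, Entails, Satisfiable, Satisfies, Set.forall_mem_insert, PropForm.eval,
    Set.mem_ofPred_eq, not_exists, not_and, Bool.not_eq_true']
  exact forall_congr' fun v => by cases PropForm.eval v φ <;> simp

theorem satisfiable_insert_iff_neg_notMem_Th :
    Satisfiable (insert φ T) ↔ PropForm.neg φ ∉ Th T := by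
  simp only [Th, Entails, Satisfiable, Satisfies, Set.forall_mem_insert, PropForm.eval,
    Set.mem_ofPred_eq, not_forall, Bool.not_eq_true']
  exact exists_congr fun v => by cases PropForm.eval v φ <;> simp

end Propositional

section DefaultLogic

variable {P : Type} {S B E : Set (PropForm P)} {Δ : Finset (Default P)}

/-- The stages `E₀, E₁, …` of `IsExtension`, which are determined by `S`, `Δ` and `E`. -/
def stage (S : Set (PropForm P)) (Δ : Finset (Default P)) (E : Set (PropForm P)) :
    ℕ → Set (PropForm P)
  | 0 => S
  | j + 1 => Th (stage S Δ E j) ∪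
      {γ | ∃ δ ∈ Δ, γ = δ.con ∧ δ.pre ∈ stage S Δ E j ∧ ∀ β ∈ δ.jus, PropForm.neg β ∉ E}

theorem isExtension_iff : IsExtension S Δ E ↔ E = ⋃ j, stage S Δ E j := by
  refine ⟨fun ⟨Es, h0, hsucc, hE⟩ => ?_, fun hE => ⟨stage S Δ E, rfl, fun _ => rfl, hE⟩⟩
  have hEs : Es = stage S Δ E := funext fun j => by
    induction j with
    | zero => exact h0
    | succ j ih => rw [hsucc, ih, stage]
  rwa [← hEs]

theorem Th_stage_subset (j : ℕ) : Th (stage S Δ E j) ⊆ stage S Δ E (j + 1) :=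
  Set.subset_union_left

theorem stage_mono : Monotone (stage S Δ E) :=
  monotone_nat_of_le_succ fun j => subset_Th.trans (Th_stage_subset j)

def Fires (E : Set (PropForm P)) (δ : Default P) : Prop :=
  δ.pre ∈ E ∧ ∀ β ∈ δ.jus, PropForm.neg β ∉ E

def baseOf (S : Set (PropForm P)) (L : List (Default P)) : Set (PropForm P) :=
  S ∪ {ψ | ∃ δ ∈ L, δ.con = ψ}

theorem baseOf_mono {L₁ L₂ : List (Default P)} (h : L₁ ⊆ L₂) : baseOf S L₁ ⊆ baseOf S L₂ :=
  Set.union_subset_union_right _ fun _ ⟨δ, hδ, hψ⟩ => ⟨δ, h hδ, hψ⟩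

theorem baseOf_nil : baseOf S [] = S := by simp [baseOf]

theorem baseOf_append_singleton (L : List (Default P)) (δ : Default P) :
    baseOf S (L ++ [δ]) = insert δ.con (baseOf S L) := by
  ext ψ
  simp only [baseOf, Set.mem_union, Set.mem_insert_iff, Set.mem_ofPred_eq, List.mem_append,
    List.mem_singleton, or_and_right, exists_or, exists_eq_left, eq_comm (a := ψ)]
  grind

/-- `L₁` lists the defaults already applied, like the accumulator of `ValidFrom`. -/
def GroundedFrom (S : Set (PropForm P)) : List (Default P) → List (Default P) → Prop
  | _, [] => True
  | L₁, δ :: L₂ => δ.pre ∈ Th (baseOf S L₁) ∧ GroundedFrom S (L₁ ++ [δ]) L₂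

theorem GroundedFrom.pre_mem_Th {L₁ L₂ : List (Default P)} (h : GroundedFrom S L₁ L₂)
    {δ : Default P} (hδ : δ ∈ L₂) : δ.pre ∈ Th (baseOf S (L₁ ++ L₂)) := by
  induction L₂ generalizing L₁ with
  | nil => simp at hδ
  | cons δ' L₂ ih =>
    obtain ⟨hpre, h⟩ := h
    rcases List.mem_cons.1 hδ with rfl | hδ
    · exact Th_mono (baseOf_mono (List.subset_append_left _ _)) hpre
    · simpa using ih h hδ

structure IsGenerating (S : Set (PropForm P)) (Δ : Finset (Default P)) (L : List (Default P)) :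
    Prop where
  grounded : GroundedFrom S [] L
  satisfiable : Satisfiable (baseOf S L)
  mem_iff : ∀ δ, δ ∈ L ↔ δ ∈ Δ ∧ Fires (Th (baseOf S L)) δ

theorem stage_subset_Th (hS : S ⊆ Th B) (hcl : ∀ δ ∈ Δ, Fires (Th B) δ → δ.con ∈ Th B) :
    ∀ j, stage S Δ (Th B) j ⊆ Th B
  | 0 => hS
  | j + 1 => by
    rintro ψ (hψ | ⟨δ, hδ, rfl, hpre, hjus⟩)
    · exact Th_Th.subset (Th_mono (stage_subset_Th hS hcl j) hψ)
    · exact hcl δ hδ ⟨stage_subset_Th hS hcl j hpre, hjus⟩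

theorem exists_baseOf_subset_stage {L₁ L₂ : List (Default P)} {n : ℕ}
    (hL₂ : ∀ δ ∈ L₂, δ ∈ Δ ∧ ∀ β ∈ δ.jus, PropForm.neg β ∉ E) (hg : GroundedFrom S L₁ L₂)
    (hn : baseOf S L₁ ⊆ stage S Δ E n) : ∃ m, baseOf S (L₁ ++ L₂) ⊆ stage S Δ E m := by
  induction L₂ generalizing L₁ n with
  | nil => exact ⟨n, by simpa using hn⟩
  | cons δ L₂ ih =>
    obtain ⟨hpre, hg⟩ := hg
    obtain ⟨hδ, hjus⟩ := hL₂ δ List.mem_cons_self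
    have hcon : δ.con ∈ stage S Δ E (n + 2) :=
      Or.inr ⟨δ, hδ, rfl, Th_stage_subset n (Th_mono hn hpre), hjus⟩
    have hbase : baseOf S (L₁ ++ [δ]) ⊆ stage S Δ E (n + 2) := by
      rw [baseOf_append_singleton]
      exact Set.insert_subset hcon (hn.trans (stage_mono (by omega)))
    simpa using ih (fun δ' h => hL₂ δ' (List.mem_cons_of_mem _ h)) hg hbase

theorem IsGenerating.isExtension {L : List (Default P)} (h : IsGenerating S Δ L) :
    IsExtension S Δ (Th (baseOf S L)) := by
  have hfires {δ} (hδ : δ ∈ L) := (h.mem_iff δ).1 hδ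
  obtain ⟨m, hm⟩ := exists_baseOf_subset_stage (E := Th (baseOf S L)) (n := 0)
    (fun δ hδ => ⟨(hfires hδ).1, (hfires hδ).2.2⟩) h.grounded (by simp [baseOf_nil, stage])
  rw [isExtension_iff]
  refine Set.Subset.antisymm (fun ψ hψ => Set.mem_iUnion.2 ⟨m + 1, ?_⟩) ?_
  · exact Th_stage_subset m (Th_mono (by simpa using hm) hψ)
  · refine Set.iUnion_subset (stage_subset_Th (subset_Th.trans' Set.subset_union_left) ?_)
    exact fun δ hδ hf => subset_Th (Or.inr ⟨δ, (h.mem_iff δ).2 ⟨hδ, hf⟩, rfl⟩)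

end DefaultLogic

section Decomposition

variable {P : Type} {S E : Set (PropForm P)} {Δ : Finset (Default P)}

theorem groundedFrom_of_pairwise (r : Default P → ℕ) {L₁ L₂ : List (Default P)}
    (hsort : L₂.Pairwise (r · ≤ r ·))
    (hpre : ∀ δ ∈ L₂, δ.pre ∈ Th (S ∪ {ψ | ∃ δ' ∈ L₁ ++ L₂, r δ' < r δ ∧ δ'.con = ψ})) :
    GroundedFrom S L₁ L₂ := by
  induction L₂ generalizing L₁ with
  | nil => trivial
  | cons δ L₂ ih =>
    obtain ⟨hle, hsort⟩ := List.pairwise_cons.1 hsort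
    refine ⟨Th_mono (Set.union_subset_union_right _ ?_) (hpre δ List.mem_cons_self), ?_⟩
    · rintro _ ⟨δ', hδ', hlt, rfl⟩
      refine ⟨δ', ?_, rfl⟩
      rcases List.mem_append.1 hδ' with h | h | ⟨_, h⟩
      · exact h
      · exact absurd hlt (lt_irrefl _)
      · exact absurd (hle δ' h) (not_le.2 hlt)
    · exact ih hsort fun δ' h => by simpa using hpre δ' (List.mem_cons_of_mem _ h)

noncomputable def firstStage (S : Set (PropForm P)) (Δ : Finset (Default P))
    (E : Set (PropForm P)) (δ : Default P) : ℕ :=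
  sInf {j | δ.pre ∈ stage S Δ E j}

theorem pre_mem_stage_firstStage (hE : E = ⋃ j, stage S Δ E j) {δ : Default P}
    (h : δ.pre ∈ E) : δ.pre ∈ stage S Δ E (firstStage S Δ E δ) :=
  Nat.sInf_mem (Set.mem_iUnion.1 (hE ▸ h))

theorem stage_subset_Th_firstStage_lt (hE : E = ⋃ j, stage S Δ E j) : ∀ j, stage S Δ E j ⊆
    Th (S ∪ {ψ | ∃ δ ∈ Δ, Fires E δ ∧ firstStage S Δ E δ < j ∧ δ.con = ψ})
  | 0 => subset_Th.trans' Set.subset_union_left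
  | j + 1 => by
    rintro ψ (hψ | ⟨δ, hδ, rfl, hpre, hjus⟩)
    · refine Th_Th.subset (Th_mono ((stage_subset_Th_firstStage_lt hE j).trans (Th_mono ?_)) hψ)
      exact Set.union_subset_union_right _ fun _ ⟨δ, hδ, hf, hlt, hψ⟩ =>
        ⟨δ, hδ, hf, hlt.trans (Nat.lt_succ_self j), hψ⟩
    · have hpreE : δ.pre ∈ E := hE ▸ Set.mem_iUnion.2 ⟨j, hpre⟩
      exact subset_Th (Or.inr ⟨δ, hδ, ⟨hpreE, hjus⟩, Nat.lt_succ_of_le (Nat.sInf_le hpre), rfl⟩)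

theorem Th_baseOf_eq (hE : E = ⋃ j, stage S Δ E j) {L : List (Default P)}
    (hL : ∀ δ, δ ∈ L ↔ δ ∈ Δ ∧ Fires E δ) : Th (baseOf S L) = E := by
  set m := Δ.sup (firstStage S Δ E · + 1)
  have hbase : baseOf S L ⊆ stage S Δ E m := by
    rintro _ (hψ | ⟨δ, hδ, rfl⟩)
    · exact stage_mono (Nat.zero_le m) hψ
    · obtain ⟨hδΔ, hf⟩ := (hL δ).1 hδ
      exact stage_mono (Finset.le_sup (f := (firstStage S Δ E · + 1)) hδΔ)
        (Or.inr ⟨δ, hδΔ, rfl, pre_mem_stage_firstStage hE hf.1, hf.2⟩)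
  refine Set.Subset.antisymm (fun ψ hψ => hE ▸ Set.mem_iUnion.2 ⟨m + 1, ?_⟩) ?_
  · exact Th_stage_subset m (Th_mono hbase hψ)
  · refine hE.subset.trans (Set.iUnion_subset fun j => (stage_subset_Th_firstStage_lt hE j).trans ?_)
    exact Th_mono (Set.union_subset_union_right _ fun _ ⟨δ, hδ, hf, _, hψ⟩ =>
      ⟨δ, (hL δ).2 ⟨hδ, hf⟩, hψ⟩)

theorem IsExtension.exists_isGenerating (hE : IsExtension S Δ E) (hu : E ≠ Set.univ) :
    ∃ L : List (Default P), L.Nodup ∧ IsGenerating S Δ L ∧ Th (baseOf S L) = E := by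
  classical
  rw [isExtension_iff] at hE
  set r := firstStage S Δ E
  set L := (Δ.filter (Fires E)).toList.insertionSort (r · ≤ r ·)
  have hmem : ∀ δ, δ ∈ L ↔ δ ∈ Δ ∧ Fires E δ := by simp [L]
  have hTh : Th (baseOf S L) = E := Th_baseOf_eq hE hmem
  refine ⟨L, (List.perm_insertionSort _ _).nodup_iff.2 (Finset.nodup_toList _), ⟨?_, ?_, ?_⟩, hTh⟩
  · refine groundedFrom_of_pairwise r (List.pairwise_insertionSort _ _) fun δ hδ => ?_
    have hpre := stage_subset_Th_firstStage_lt hE _ (pre_mem_stage_firstStage hE ((hmem δ).1 hδ).2.1)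
    refine Th_mono (Set.union_subset_union_right _ ?_) hpre
    exact fun _ ⟨δ', hδ', hf, hlt, hψ⟩ => ⟨δ', by simpa using (hmem δ').2 ⟨hδ', hf⟩, hlt, hψ⟩
  · by_contra h
    exact hu (hTh ▸ Th_eq_univ h)
  · simpa only [hTh] using hmem

end Decomposition

section Translation

variable {P : Type} {S : Set (PropForm P)} {Δ : Finset (Default P)}

/-- The formulas `ψ` such that `a → ψ` is an axiom of `Ξ` (reading `a_δ^p → ¬pre(δ)` with
`ψ = ¬pre(δ)`). -/
def guarded (Δ : Finset (Default P)) : ALabel P → Set (PropForm P)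
  | .pre δ => {ψ | δ ∈ Δ ∧ ψ = .neg δ.pre}
  | .jus δ i => {ψ | δ ∈ Δ ∧ δ.jus[i]? = some ψ}
  | .con δ => {ψ | δ ∈ Δ ∧ ψ = δ.con}

def forced (Δ : Finset (Default P)) (s : Set (ALabel P)) : Set (PropForm P) :=
  ⋃ a ∈ s, guarded Δ a

def posAtoms (α : Set (ALit P)) : Set (ALabel P) := {a | ⟨a, true⟩ ∈ α}

theorem eval_emb (w : VA P → Bool) (φ : PropForm P) : (emb φ).eval w = φ.eval (w ∘ Sum.inl) :=
  PropForm.eval_map _ _ _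

theorem eval_impl_avar_emb {w : VA P → Bool} {a : ALabel P} {ψ : PropForm P} :
    (PropForm.impl (avar a) (emb ψ)).eval w = true ↔
      (w (.inr a) = true → ψ.eval (w ∘ Sum.inl) = true) := by
  cases h : w (.inr a) <;> simp [PropForm.eval, avar, eval_emb, h]

theorem satisfies_Xi_iff {w : VA P → Bool} : Satisfies w (Xi S Δ) ↔
    Satisfies (w ∘ Sum.inl) (S ∪ forced Δ {a | w (.inr a) = true}) := by
  simp only [Xi, satisfies_union]
  refine and_congr (by simp [Satisfies, eval_emb]) ⟨fun h ψ hψ => ?_, fun h χ hχ => ?_⟩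
  · obtain ⟨a, ha, hψ⟩ := Set.mem_iUnion₂.1 hψ
    have hax {δ χ} (hδ : δ ∈ Δ) (hχ : χ ∈ transDefault δ) := h χ (Set.mem_biUnion hδ hχ)
    cases a with
    | pre δ =>
      obtain ⟨hδ, rfl⟩ := hψ
      exact eval_impl_avar_emb.1 (hax hδ (Or.inl (Or.inl rfl))) ha
    | jus δ i =>
      obtain ⟨hδ, hi⟩ := hψ
      obtain ⟨hlt, rfl⟩ := List.getElem?_eq_some_iff.1 hi
      exact eval_impl_avar_emb.1 (hax hδ (Or.inl (Or.inr ⟨⟨i, hlt⟩, rfl⟩))) ha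
    | con δ =>
      obtain ⟨hδ, rfl⟩ := hψ
      exact eval_impl_avar_emb.1 (hax hδ (Or.inr rfl)) ha
  · obtain ⟨δ, hδ, hχ⟩ := Set.mem_iUnion₂.1 hχ
    have hforced {a ψ} (hψ : ψ ∈ guarded Δ a) : PropForm.eval w (.impl (avar a) (emb ψ)) = true :=
      eval_impl_avar_emb.2 fun ha => h ψ (Set.mem_biUnion ha hψ)
    rcases hχ with (rfl | ⟨i, rfl⟩) | rfl
    · exact hforced (a := .pre δ) ⟨hδ, rfl⟩
    · exact hforced (a := .jus δ i) ⟨hδ, by simp⟩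
    · exact hforced (a := .con δ) ⟨hδ, rfl⟩

theorem satisfies_litForms_iff {w : VA P → Bool} {α : Set (ALit P)} :
    Satisfies w (litForms α) ↔ ∀ ℓ ∈ α, w (.inr ℓ.atom) = ℓ.sign := by
  simp only [Satisfies, litForms, Set.forall_mem_image]
  refine forall₂_congr fun ⟨a, s⟩ _ => ?_
  cases s <;> simp [ALit.form, avar, PropForm.eval]

open Classical in
noncomputable def liftVal (s : Set (ALabel P)) (v : P → Bool) : VA P → Bool :=
  Sum.elim v fun a => decide (a ∈ s)

theorem forced_mono {s t : Set (ALabel P)} (h : s ⊆ t) : forced Δ s ⊆ forced Δ t :=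
  Set.biUnion_subset_biUnion_left h

theorem satisfies_forced_of_satisfies {α : Set (ALit P)} {w : VA P → Bool}
    (hw : Satisfies w (Xi S Δ ∪ litForms α)) :
    Satisfies (w ∘ Sum.inl) (S ∪ forced Δ (posAtoms α)) := by
  obtain ⟨hΞ, hα⟩ := satisfies_union.1 hw
  refine fun ψ hψ => satisfies_Xi_iff.1 hΞ ψ (Set.union_subset_union_right _ (forced_mono ?_) hψ)
  exact fun a ha => satisfies_litForms_iff.1 hα _ ha

theorem satisfies_liftVal {α : Set (ALit P)} (hα : IsTerm α) {v : P → Bool}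
    (hv : Satisfies v (S ∪ forced Δ (posAtoms α))) :
    Satisfies (liftVal (posAtoms α) v) (Xi S Δ ∪ litForms α) := by
  classical
  refine satisfies_union.2 ⟨satisfies_Xi_iff.2 (by simpa [liftVal] using hv), ?_⟩
  refine satisfies_litForms_iff.2 fun ⟨a, s⟩ hℓ => ?_
  cases s
  · exact decide_eq_false fun h => hα a ⟨h, hℓ⟩
  · exact decide_eq_true hℓ

theorem inI_iff {α : Set (ALit P)} (hα : IsTerm α) :
    InI (Xi S Δ) α ↔ ¬ Satisfiable (S ∪ forced Δ (posAtoms α)) :=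
  not_congr ⟨fun ⟨_, hw⟩ => ⟨_, satisfies_forced_of_satisfies hw⟩,
    fun ⟨_, hv⟩ => ⟨_, satisfies_liftVal hα hv⟩⟩

theorem entails_emb_iff {α : Set (ALit P)} (hα : IsTerm α) {φ : PropForm P} :
    Entails (Xi S Δ ∪ litForms α) (emb φ) ↔ φ ∈ Th (S ∪ forced Δ (posAtoms α)) := by
  refine ⟨fun h v hv => ?_,
    fun h w hw => (eval_emb w φ).trans (h _ (satisfies_forced_of_satisfies hw))⟩
  simpa [eval_emb, liftVal] using h _ (satisfies_liftVal hα hv)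

end Translation

section DefaultTerms

variable {P : Type} {S : Set (PropForm P)} {Δ : Finset (Default P)} {L : List (Default P)}
  {δ : Default P}

def conLitSet (L : List (Default P)) : Set (ALit P) := {ℓ | ∃ δ ∈ L, ℓ = conLit δ}

def jusLitsOf (L : List (Default P)) : Set (ALit P) := {ℓ | ∃ δ ∈ L, ℓ ∈ jusLits δ}

theorem runList_append_singleton (L : List (Default P)) (δ : Default P) :
    runList (L ++ [δ]) = stepPair δ (runList L) :=
  List.foldl_append

theorem runList_eq (L : List (Default P)) : runList L = (conLitSet L, jusLitsOf L) := by
  induction L using List.reverseRecOn with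
  | nil => simp [runList, conLitSet, jusLitsOf]
  | append_singleton L δ ih =>
    rw [runList_append_singleton, ih, stepPair]
    ext <;> simp [conLitSet, jusLitsOf, or_and_right, exists_or, or_comm]

theorem conLitSet_sign : ∀ ℓ ∈ conLitSet L, ℓ.sign = true := fun _ ⟨_, _, h⟩ => h ▸ rfl

theorem isTerm_of_sign {α : Set (ALit P)} (h : ∀ ℓ ∈ α, ℓ.sign = true) : IsTerm α :=
  fun _ ⟨_, ha⟩ => Bool.false_ne_true (h _ ha)

theorem isTerm_insert_conLitSet {ℓ : ALit P} (hℓ : ℓ.sign = true) :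
    IsTerm (insert ℓ (conLitSet L)) :=
  isTerm_of_sign (Set.forall_mem_insert.2 ⟨hℓ, conLitSet_sign⟩)

theorem posAtoms_insert_true (a : ALabel P) (α : Set (ALit P)) :
    posAtoms (insert ⟨a, true⟩ α) = insert a (posAtoms α) := by
  ext; simp [posAtoms]

theorem forced_insert (a : ALabel P) (s : Set (ALabel P)) :
    forced Δ (insert a s) = guarded Δ a ∪ forced Δ s :=
  Set.biUnion_insert _ _ _

theorem union_forced_posAtoms_conLitSet (hL : ∀ δ ∈ L, δ ∈ Δ) :
    S ∪ forced Δ (posAtoms (conLitSet L)) = baseOf S L := by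
  ext ψ
  simp only [forced, posAtoms, conLitSet, conLit, baseOf, Set.mem_union, Set.mem_iUnion]
  refine or_congr_right ⟨?_, ?_⟩
  · rintro ⟨_, ⟨δ, hδ, h⟩, hψ⟩
    cases h
    exact ⟨δ, hδ, hψ.2.symm⟩
  · rintro ⟨δ, hδ, rfl⟩
    exact ⟨.con δ, ⟨δ, hδ, rfl⟩, hL δ hδ, rfl⟩

theorem union_forced_posAtoms_insert_conLitSet (hL : ∀ δ ∈ L, δ ∈ Δ) (a : ALabel P) :
    S ∪ forced Δ (posAtoms (insert ⟨a, true⟩ (conLitSet L))) =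
      guarded Δ a ∪ baseOf S L := by
  rw [posAtoms_insert_true, forced_insert, ← union_forced_posAtoms_conLitSet hL,
    Set.union_left_comm]

theorem inI_insert_preLit_iff (hδ : δ ∈ Δ) (hL : ∀ δ ∈ L, δ ∈ Δ) :
    InI (Xi S Δ) (insert (preLit δ) (conLitSet L)) ↔ δ.pre ∈ Th (baseOf S L) := by
  rw [inI_iff (isTerm_insert_conLitSet rfl), preLit, union_forced_posAtoms_insert_conLitSet hL,
    mem_Th_iff_not_satisfiable_insert_neg]
  simp [guarded, hδ, Set.singleton_union]

theorem not_inI_insert_jusLit_iff (hδ : δ ∈ Δ) (hL : ∀ δ ∈ L, δ ∈ Δ) (i : Fin δ.jus.length) :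
    ¬ InI (Xi S Δ) (insert (jusLit δ i) (conLitSet L)) ↔
      PropForm.neg (δ.jus.get i) ∉ Th (baseOf S L) := by
  rw [inI_iff (isTerm_insert_conLitSet rfl), jusLit, union_forced_posAtoms_insert_conLitSet hL,
    not_not, ← satisfiable_insert_iff_neg_notMem_Th]
  simp [guarded, hδ, Set.singleton_union]

theorem not_inI_conLitSet_iff (hL : ∀ δ ∈ L, δ ∈ Δ) :
    ¬ InI (Xi S Δ) (conLitSet L) ↔ Satisfiable (baseOf S L) := by
  rw [inI_iff (isTerm_of_sign conLitSet_sign), union_forced_posAtoms_conLitSet hL, not_not]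

theorem applicable_conLitSet_iff (hδ : δ ∈ Δ) (hL : ∀ δ ∈ L, δ ∈ Δ) :
    Applicable (Xi S Δ) δ (conLitSet L) ↔ Fires (Th (baseOf S L)) δ := by
  simp only [Applicable, Fires, inI_insert_preLit_iff hδ hL, not_inI_insert_jusLit_iff hδ hL,
    List.forall_mem_iff_get]

theorem isStruct_conLitSet_iff (hL : ∀ δ ∈ L, δ ∈ Δ) :
    IsStruct (Xi S Δ) (conLitSet L) (jusLitsOf L) ↔
      Satisfiable (baseOf S L) ∧ ∀ δ ∈ L, ∀ β ∈ δ.jus, PropForm.neg β ∉ Th (baseOf S L) := by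
  simp only [IsStruct, isTerm_of_sign conLitSet_sign, true_and, not_inI_conLitSet_iff hL]
  refine and_congr_right fun _ => ⟨fun h δ hδ => List.forall_mem_iff_get.2 fun i => ?_, ?_⟩
  · exact (not_inI_insert_jusLit_iff (hL δ hδ) hL i).1 (h _ ⟨δ, hδ, i, rfl⟩)
  · rintro h _ ⟨δ, hδ, i, rfl⟩
    exact (not_inI_insert_jusLit_iff (hL δ hδ) hL i).2 (List.forall_mem_iff_get.1 (h δ hδ) i)

end DefaultTerms

section Accessible

variable {P : Type} {S : Set (PropForm P)} {Δ : Finset (Default P)}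

theorem groundedFrom_of_validFrom {L₁ L₂ : List (Default P)} (hL : ∀ δ ∈ L₁ ++ L₂, δ ∈ Δ)
    (h : ValidFrom (Xi S Δ) (runList L₁) L₂) : GroundedFrom S L₁ L₂ := by
  induction L₂ generalizing L₁ with
  | nil => trivial
  | cons δ L₂ ih =>
    obtain ⟨-, happ, h⟩ := h
    rw [runList_eq] at happ
    refine ⟨((applicable_conLitSet_iff (hL δ (by simp)) fun δ' h' => hL δ' (by simp [h'])).1
      happ).1, ih (by simpa using hL) (by rwa [runList_append_singleton])⟩

theorem validFrom_of_groundedFrom {L₁ L₂ : List (Default P)} (hL : ∀ δ ∈ L₁ ++ L₂, δ ∈ Δ)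
    (hsat : Satisfiable (baseOf S (L₁ ++ L₂)))
    (hjus : ∀ δ ∈ L₁ ++ L₂, ∀ β ∈ δ.jus, PropForm.neg β ∉ Th (baseOf S (L₁ ++ L₂)))
    (h : GroundedFrom S L₁ L₂) : ValidFrom (Xi S Δ) (runList L₁) L₂ := by
  induction L₂ generalizing L₁ with
  | nil => trivial
  | cons δ L₂ ih =>
    obtain ⟨hpre, h⟩ := h
    have hL₁ : ∀ δ ∈ L₁, δ ∈ Δ := fun δ' h' => hL δ' (by simp [h'])
    have hsub : baseOf S L₁ ⊆ baseOf S (L₁ ++ δ :: L₂) := baseOf_mono (List.subset_append_left _ _)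
    have hjus₁ {δ'} (h' : δ' ∈ L₁ ++ δ :: L₂) : ∀ β ∈ δ'.jus, PropForm.neg β ∉ Th (baseOf S L₁) :=
      fun β hβ hneg => hjus δ' h' β hβ (Th_mono hsub hneg)
    refine ⟨?_, ?_, ?_⟩
    · rw [runList_eq]
      exact (isStruct_conLitSet_iff hL₁).2 ⟨hsat.mono hsub, fun δ' h' => hjus₁ (by simp [h'])⟩
    · rw [runList_eq]
      exact (applicable_conLitSet_iff (hL δ (by simp)) hL₁).2 ⟨hpre, hjus₁ (by simp)⟩
    · rw [← runList_append_singleton]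
      exact ih (by simpa using hL) (by simpa using hsat) (by simpa using hjus) h

theorem IsGenerating.subset {L : List (Default P)} (h : IsGenerating S Δ L) : ∀ δ ∈ L, δ ∈ Δ :=
  fun δ hδ => ((h.mem_iff δ).1 hδ).1

theorem mem_dt_iff {α : Set (ALit P)} :
    α ∈ dt (Xi S Δ) Δ ↔ ∃ L : List (Default P), L.Nodup ∧ IsGenerating S Δ L ∧ α = conLitSet L := by
  constructor
  · rintro ⟨𝒜, L, hnd, hLΔ, hvalid, hrun, hstruct, hcl⟩
    obtain ⟨rfl, rfl⟩ := Prod.mk.inj (hrun.symm.trans (runList_eq L))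
    obtain ⟨hsat, hjus⟩ := (isStruct_conLitSet_iff hLΔ).1 hstruct
    have hg : GroundedFrom S [] L := groundedFrom_of_validFrom (by simpa using hLΔ) hvalid
    refine ⟨L, hnd, ⟨hg, hsat, fun δ => ⟨fun hδ => ?_, fun ⟨hδ, hf⟩ => ?_⟩⟩, rfl⟩
    · exact ⟨hLΔ δ hδ, by simpa using hg.pre_mem_Th hδ, hjus δ hδ⟩
    · exact hcl δ hδ ((applicable_conLitSet_iff hδ hLΔ).2 hf)
  · rintro ⟨L, hnd, hgen, rfl⟩
    have hjus : ∀ δ ∈ L, ∀ β ∈ δ.jus, PropForm.neg β ∉ Th (baseOf S L) :=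
      fun δ hδ => ((hgen.mem_iff δ).1 hδ).2.2
    refine ⟨jusLitsOf L, L, hnd, hgen.subset, ?_, runList_eq L, ?_, fun δ hδ happ => ?_⟩
    · exact validFrom_of_groundedFrom (by simpa using hgen.subset)
        (by simpa using hgen.satisfiable) (by simpa using hjus) hgen.grounded
    · exact (isStruct_conLitSet_iff hgen.subset).2 ⟨hgen.satisfiable, hjus⟩
    · exact (hgen.mem_iff δ).2 ⟨hδ, (applicable_conLitSet_iff hδ hgen.subset).1 happ⟩

end Accessible

section SupportingArguments

variable {P : Type} {S : Set (PropForm P)} {Δ : Finset (Default P)} {β : Set (ALit P)}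

def completeTerm (β : Set (ALit P)) : Set (ALit P) :=
  β ∪ {ℓ | ℓ.sign = false ∧ ⟨ℓ.atom, true⟩ ∉ β}

theorem posAtoms_completeTerm (β : Set (ALit P)) : posAtoms (completeTerm β) = posAtoms β := by
  ext; simp [posAtoms, completeTerm]

theorem posAtoms_posPart (α : Set (ALit P)) : posAtoms (posPart α) = posAtoms α := by
  ext; simp [posAtoms, _root_.posPart]

theorem posPart_completeTerm (hβ : ∀ ℓ ∈ β, ℓ.sign = true) : posPart (completeTerm β) = β := by
  ext ℓ
  refine ⟨?_, fun h => ⟨Or.inl h, hβ ℓ h⟩⟩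
  rintro ⟨h | ⟨hs, -⟩, hs'⟩
  · exact h
  · exact absurd (hs.symm.trans hs') Bool.false_ne_true

theorem isTerm_completeTerm (hβ : ∀ ℓ ∈ β, ℓ.sign = true) : IsTerm (completeTerm β) := by
  rintro a ⟨hT | ⟨hs, -⟩, hF | ⟨-, hF⟩⟩
  · exact Bool.false_ne_true (hβ _ hF)
  · exact hF hT
  all_goals cases hs

theorem eq_completeTerm_of_subset {α : Set (ALit P)} (hα : IsTerm α) (h : completeTerm β ⊆ α) :
    α = completeTerm β := by
  refine Set.Subset.antisymm (fun ⟨a, s⟩ hℓ => ?_) h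
  cases s
  · exact Or.inr ⟨rfl, fun hT => hα a ⟨h (Or.inl hT), hℓ⟩⟩
  · by_contra hnot
    exact hα a ⟨hℓ, h (Or.inr ⟨rfl, fun hT => hnot (Or.inl hT)⟩)⟩

theorem exists_mem_sp_posPart_iff (hβ : ∀ ℓ ∈ β, ℓ.sign = true) {φ : PropForm P} :
    (∃ α ∈ sp (Xi S Δ) (emb φ), β = posPart α) ↔
      Satisfiable (S ∪ forced Δ (posAtoms β)) ∧ φ ∈ Th (S ∪ forced Δ (posAtoms β)) := by
  constructor
  · rintro ⟨α, ⟨hα, hent, hcons⟩, rfl⟩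
    rw [posAtoms_posPart]
    exact ⟨not_not.1 (mt (inI_iff hα).2 (hcons α hα subset_rfl)), (entails_emb_iff hα).1 hent⟩
  · rintro ⟨hsat, hφ⟩
    have ht := isTerm_completeTerm hβ
    refine ⟨completeTerm β, ⟨ht, ?_, fun α hα hsub => ?_⟩, (posPart_completeTerm hβ).symm⟩
    · rwa [entails_emb_iff ht, posAtoms_completeTerm]
    · rwa [eq_completeTerm_of_subset hα hsub, inI_iff ht, posAtoms_completeTerm, not_not]

end SupportingArguments

/-- Theorem 5.4 (ii).  A formula `φ ∈ L_P` is a skeptical consequence of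
`⟨S, Δ⟩` (it belongs to all extensions) iff `dt(Ξ) ⊆ {α⁺ : α ∈ sp(φ; Ξ)}`. -/
theorem skeptical_iff_dt_subset_sp
    {P : Type} (S : Finset (PropForm P)) (Δ : Finset (Default P))
    (φ : PropForm P) :
    (∀ E, IsExtension (↑S) Δ E → φ ∈ E) ↔
      dt (Xi (↑S) Δ) Δ ⊆ {β | ∃ α ∈ sp (Xi (↑S) Δ) (emb φ), β = posPart α} := by
  constructor
  · intro h α hα
    obtain ⟨L, -, hgen, rfl⟩ := mem_dt_iff.1 hα
    rw [Set.mem_ofPred_eq, exists_mem_sp_posPart_iff conLitSet_sign,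
      union_forced_posAtoms_conLitSet hgen.subset]
    exact ⟨hgen.satisfiable, h _ hgen.isExtension⟩
  · intro h E hE
    by_cases hu : E = Set.univ
    · exact hu ▸ trivial
    obtain ⟨L, hnd, hgen, rfl⟩ := hE.exists_isGenerating hu
    have hsp := (exists_mem_sp_posPart_iff conLitSet_sign).1 (h (mem_dt_iff.2 ⟨L, hnd, hgen, rfl⟩))
    rw [union_forced_posAtoms_conLitSet hgen.subset] at hsp
    exact hsp.2
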